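/- For a p-adic measure μ on ℤ_p with values in W and any integer m ≥ 0, the power series attached to the measure x^m·μ (defined by ∫ φ d(x^m μ) = ∫ φ(x) x^m dμ) equals θ^m Φ_μ, where θ = t·d/dt is the differential operator on W[[t-1]]; that is, Φ_{x^m μ}(t) = (t d/dt)^m Φ_μ(t). -/

import Mathlib

/-! Since `x · binom(x, n) = (n + 1) · binom(x, n + 1) + n · binom(x, n)`, multiplying a measure by
`x` transforms the coefficients `aₙ = ∫ binom(x, n) dμ` of its Amice transform into
`(n + 1) aₙ₊₁ + n aₙ`, which are exactly the coefficients of `(1 + T) F'` for `F = Σ aₙ Tⁿ`;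
the claim follows by induction on `m`. -/

open PadicInt PowerSeries

/-- Binomial coefficient function as a continuous map with values in `W`. -/
noncomputable def binomMap (p : ℕ) [Fact p.Prime] (W : Type*) [NormedCommRing W]
    [Algebra ℤ_[p] W] (hca : Continuous (algebraMap ℤ_[p] W)) (n : ℕ) : C(ℤ_[p], W) :=
  (⟨algebraMap ℤ_[p] W, hca⟩ : C(ℤ_[p], W)).comp
    ⟨fun x => Ring.choose x n, PadicInt.continuous_choose n⟩

/-- The Amice transform `Φ_μ` of a measure: its `n`-th coefficient (in `T = t-1`) is
`∫ binom(x,n) dμ`. -/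
noncomputable def amice (p : ℕ) [Fact p.Prime] (W : Type*) [NormedCommRing W]
    [Algebra ℤ_[p] W] (hca : Continuous (algebraMap ℤ_[p] W))
    (μ : C(ℤ_[p], W) →L[W] W) : PowerSeries W :=
  PowerSeries.mk fun n => μ (binomMap p W hca n)

/-- The operator `θ = t·d/dt` on `W[[T]]` with `t = 1 + T`. -/
noncomputable def theta (W : Type*) [CommRing W] (F : PowerSeries W) : PowerSeries W :=
  (1 + PowerSeries.X) * F.derivativeFun

theorem Ring.self_mul_choose {R : Type*} [CommRing R] [BinomialRing R] (r : R) (n : ℕ) :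
    r * Ring.choose r n = (n + 1) • Ring.choose r (n + 1) + n • Ring.choose r n := by
  have h := Ring.choose_smul_choose r (Nat.le_add_right n 1)
  rw [Nat.choose_succ_self_right, Nat.add_sub_cancel_left, Ring.choose_one_right] at h
  rw [h, nsmul_eq_mul]
  ring

theorem coeff_theta {R : Type*} [CommRing R] (F : R⟦X⟧) (n : ℕ) :
    coeff n (theta R F) = (n + 1) • coeff (n + 1) F + n • coeff n F := by
  rw [theta, add_mul, one_mul, map_add, derivativeFun, Derivation.toFun_eq_coe,
    coeff_derivative]
  rcases n with _ | n
  · simp [mul_comm]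
  · rw [coeff_succ_X_mul, coeff_derivative]
    simp only [nsmul_eq_mul]
    push_cast
    ring

namespace ContinuousMap

variable {X R : Type*} [TopologicalSpace X] [LocallyCompactSpace X]
  [CommSemiring R] [TopologicalSpace R] [IsTopologicalSemiring R]

def mulLeftCLM (f : C(X, R)) :
    C(X, R) →L[R] C(X, R) where
  toFun g := f * g
  map_add' := mul_add f
  map_smul' c g := mul_smul_comm c f g
  cont := continuous_const.mul continuous_id

theorem mulLeftCLM_apply (f g : C(X, R)) : f.mulLeftCLM g = f * g :=
  rfl

end ContinuousMap

section

variable (p : ℕ) [Fact p.Prime] (W : Type*) [NormedCommRing W] [Algebra ℤ_[p] W]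
  (hca : Continuous (algebraMap ℤ_[p] W))

theorem mul_binomMap (n : ℕ) :
    (⟨algebraMap ℤ_[p] W, hca⟩ : C(ℤ_[p], W)) * binomMap p W hca n
      = (n + 1) • binomMap p W hca (n + 1) + n • binomMap p W hca n := by
  ext x
  simp only [binomMap, ContinuousMap.mul_apply, ContinuousMap.add_apply,
    ContinuousMap.smul_apply, ContinuousMap.comp_apply, ContinuousMap.coe_mk]
  rw [← map_mul, Ring.self_mul_choose, map_add, map_nsmul, map_nsmul]

theorem amice_comp_mulLeftCLM (μ : C(ℤ_[p], W) →L[W] W) :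
    amice p W hca (μ.comp (ContinuousMap.mulLeftCLM ⟨algebraMap ℤ_[p] W, hca⟩))
      = theta W (amice p W hca μ) := by
  ext n
  rw [coeff_theta, amice, amice, coeff_mk, coeff_mk, coeff_mk, ContinuousLinearMap.comp_apply,
    ContinuousMap.mulLeftCLM_apply, mul_binomMap, map_add, map_nsmul, map_nsmul]

end

theorem statement2_general (p : ℕ) [Fact p.Prime] (W : Type*) [NormedCommRing W]
    [Algebra ℤ_[p] W] (hca : Continuous (algebraMap ℤ_[p] W))
    (m : ℕ) (μ ν : C(ℤ_[p], W) →L[W] W)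
    (hν : ∀ φ : C(ℤ_[p], W),
      ν φ = μ ((⟨algebraMap ℤ_[p] W, hca⟩ : C(ℤ_[p], W)) ^ m * φ)) :
    amice p W hca ν = (theta W)^[m] (amice p W hca μ) := by
  induction m generalizing μ with
  | zero =>
    obtain rfl : ν = μ := ContinuousLinearMap.ext fun φ => by rw [hν, pow_zero, one_mul]
    rfl
  | succ m ih =>
    have hν' : ∀ φ, ν φ = μ.comp (ContinuousMap.mulLeftCLM ⟨algebraMap ℤ_[p] W, hca⟩)
        ((⟨algebraMap ℤ_[p] W, hca⟩ : C(ℤ_[p], W)) ^ m * φ) := fun φ => by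
      rw [hν, pow_succ', mul_assoc]
      rfl
    rw [ih _ hν', amice_comp_mulLeftCLM, Function.iterate_succ_apply]

theorem statement2 (p : ℕ) [Fact p.Prime] (W : Type*) [NormedCommRing W] [CompleteSpace W]
    [Algebra ℤ_[p] W] (hca : Continuous (algebraMap ℤ_[p] W))
    (m : ℕ) (μ ν : C(ℤ_[p], W) →L[W] W)
    (hν : ∀ φ : C(ℤ_[p], W),
      ν φ = μ ((⟨algebraMap ℤ_[p] W, hca⟩ : C(ℤ_[p], W)) ^ m * φ)) :
    amice p W hca ν = (theta W)^[m] (amice p W hca μ) :=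
  statement2_general p W hca m μ ν hν
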